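/- arXiv:1912.10031 — 3 statements merged into one kernel-verified Lean document; each statement's English description precedes it below -/
import Mathlib

section
/- Let γ: {0,…,ℓ} → {1,…,p} be a closed path (γ(0) = γ(ℓ)) with vertex set V_γ = γ({0,…,ℓ}) of size v_γ ≥ 2, such that γ is reduced: every vertex is visited at least twice (each fiber γ⁻¹(z) has at least 2 elements) and γ(u) ≠ γ(u+1) for all 0 ≤ u ≤ ℓ−1. Let s: V_γ → X be any labeling into a set X, let N be the number of connected components of the graph on V_γ whose edges are pairs {γ(i), γ(i+1)} with s(γ(i)) = s(γ(i+1)), and let C = #{ i ∈ {0,…,ℓ−1} : s(γ(i)) ≠ s(γ(i+1)) }. If N ≥ 2, then C ≥ N. -/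
/-- The agreement graph on the vertex set of the closed path `γ` (its image on `{0,…,ℓ}`):
`z` and `z'` are adjacent iff they carry the same label under `s` and form a consecutive
pair of the path. -/
def agreementGraph (p ℓ : ℕ) (γ : ℕ → Fin p) {X : Type*} (s : Fin p → X) :
    SimpleGraph ↥(γ '' Set.Iic ℓ) where
  Adj z z' := z ≠ z' ∧ s z.1 = s z'.1 ∧
    ∃ i < ℓ, ({γ i, γ (i + 1)} : Set (Fin p)) = {z.1, z'.1}
  symm := ⟨by
    rintro z z' ⟨h1, h2, i, hi, h3⟩
    exact ⟨h1.symm, h2.symm, ⟨i, hi, by rw [h3]; exact Set.pair_comm _ _⟩⟩⟩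
  loopless := ⟨fun z h => h.1 rfl⟩

/-!
Follow the closed path through the connected components of the agreement graph. It visits
every component, and a step between equally labelled vertices stays inside a component
(it is an edge, or no move at all). With at least two components, a closed path must leave
every component it enters, so each component is the start of some step that changes the
label, and these steps number at least `N`.
-/

section ClosedSequence

variable {α : Type*} {c : ℕ → α} {a : α}

theorem exists_exit_of_lt {m n : ℕ} (hm : c m = a) (hmn : m ≤ n) (hn : c n ≠ a) :
    ∃ i, m ≤ i ∧ i < n ∧ c i = a ∧ c (i + 1) ≠ a := by
  induction n, hmn using Nat.le_induction with
  | base => exact absurd hm hn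
  | succ n hmn ih =>
    by_cases hcn : c n = a
    · exact ⟨n, hmn, n.lt_succ_self, hcn, hn⟩
    · obtain ⟨i, hmi, hin, hi⟩ := ih hcn
      exact ⟨i, hmi, hin.trans n.lt_succ_self, hi⟩

theorem exists_exit_of_closed {ℓ i₀ j : ℕ} (hclosed : c ℓ = c 0) (hi₀ : i₀ ≤ ℓ)
    (hci₀ : c i₀ = a) (hj : j ≤ ℓ) (hcj : c j ≠ a) :
    ∃ i < ℓ, c i = a ∧ c (i + 1) ≠ a := by
  by_cases hcℓ : c ℓ = a
  · obtain ⟨i, -, hij, hi⟩ := exists_exit_of_lt (hclosed ▸ hcℓ) j.zero_le hcj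
    exact ⟨i, hij.trans_le hj, hi⟩
  · obtain ⟨i, -, hiℓ, hi⟩ := exists_exit_of_lt hci₀ hi₀ hcℓ
    exact ⟨i, hiℓ, hi⟩

theorem card_le_ncard_changes_of_closed [Nontrivial α] {ℓ : ℕ} (hclosed : c ℓ = c 0)
    (hsurj : ∀ a, ∃ i ≤ ℓ, c i = a) :
    Nat.card α ≤ {i | i < ℓ ∧ c i ≠ c (i + 1)}.ncard := by
  set S := {i | i < ℓ ∧ c i ≠ c (i + 1)}
  have hS : S.Finite := (Set.finite_Iio ℓ).subset fun i hi => hi.1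
  have himage : c '' S = Set.univ := by
    refine Set.eq_univ_of_forall fun a => ?_
    obtain ⟨i₀, hi₀, hci₀⟩ := hsurj a
    obtain ⟨b, hba⟩ := exists_ne a
    obtain ⟨j, hj, hcj⟩ := hsurj b
    obtain ⟨i, hiℓ, hci, hexit⟩ :=
      exists_exit_of_closed hclosed hi₀ hci₀ hj (hcj ▸ hba)
    exact ⟨i, ⟨hiℓ, hci ▸ hexit.symm⟩, hci⟩
  calc Nat.card α = (c '' S).ncard := by rw [himage, Set.ncard_univ]
    _ ≤ S.ncard := Set.ncard_image_le hS

end ClosedSequence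

section AgreementGraph

variable {p ℓ : ℕ} {γ : ℕ → Fin p} {X : Type*} {s : Fin p → X}

/-- The component of `γ i`; clamping the index to `ℓ` makes the map total. -/
def agreementComponent (p ℓ : ℕ) (γ : ℕ → Fin p) {X : Type*} (s : Fin p → X) (i : ℕ) :
    (agreementGraph p ℓ γ s).ConnectedComponent :=
  (agreementGraph p ℓ γ s).connectedComponentMk ⟨γ (min i ℓ), min i ℓ, min_le_right i ℓ, rfl⟩

theorem agreementComponent_eq_mk {i : ℕ} (hi : i ≤ ℓ) :
    agreementComponent p ℓ γ s i =
      (agreementGraph p ℓ γ s).connectedComponentMk ⟨γ i, i, hi, rfl⟩ := by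
  simp only [agreementComponent, min_eq_left hi]

theorem agreementComponent_surjective (K : (agreementGraph p ℓ γ s).ConnectedComponent) :
    ∃ i ≤ ℓ, agreementComponent p ℓ γ s i = K := by
  obtain ⟨⟨z, i, hi, rfl⟩, rfl⟩ := K.exists_rep
  exact ⟨i, hi, agreementComponent_eq_mk hi⟩

theorem agreementComponent_closed (hclosed : γ ℓ = γ 0) :
    agreementComponent p ℓ γ s ℓ = agreementComponent p ℓ γ s 0 := by
  rw [agreementComponent_eq_mk le_rfl, agreementComponent_eq_mk ℓ.zero_le]
  simp only [hclosed]

theorem agreementComponent_succ_of_label_eq {i : ℕ} (hi : i < ℓ) (hs : s (γ i) = s (γ (i + 1))) :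
    agreementComponent p ℓ γ s (i + 1) = agreementComponent p ℓ γ s i := by
  rw [agreementComponent_eq_mk hi.le, agreementComponent_eq_mk hi]
  by_cases hγ : γ i = γ (i + 1)
  · simp only [hγ]
  · exact SimpleGraph.ConnectedComponent.sound
      (SimpleGraph.Adj.reachable ⟨fun h => hγ (congrArg Subtype.val h).symm, hs.symm, i, hi,
        Set.pair_comm _ _⟩)

end AgreementGraph

theorem stmt_6_general (p ℓ : ℕ) (γ : ℕ → Fin p) (hclosed : γ ℓ = γ 0)
    {X : Type*} (s : Fin p → X)
    (N : ℕ) (hN : N = Nat.card (agreementGraph p ℓ γ s).ConnectedComponent)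
    (C : ℕ) (hC : C = {i | i < ℓ ∧ s (γ i) ≠ s (γ (i + 1))}.ncard)
    (hN2 : 2 ≤ N) :
    N ≤ C := by
  subst hN hC
  have : Finite (agreementGraph p ℓ γ s).ConnectedComponent :=
    Nat.finite_of_card_ne_zero (by omega)
  have : Nontrivial (agreementGraph p ℓ γ s).ConnectedComponent :=
    Finite.one_lt_card_iff_nontrivial.mp hN2
  have hchanges : {i | i < ℓ ∧ agreementComponent p ℓ γ s i ≠ agreementComponent p ℓ γ s (i + 1)} ⊆
      {i | i < ℓ ∧ s (γ i) ≠ s (γ (i + 1))} := fun i ⟨hi, hne⟩ =>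
    ⟨hi, fun hs => hne (agreementComponent_succ_of_label_eq hi hs).symm⟩
  calc Nat.card (agreementGraph p ℓ γ s).ConnectedComponent
      ≤ {i | i < ℓ ∧ agreementComponent p ℓ γ s i ≠ agreementComponent p ℓ γ s (i + 1)}.ncard :=
        card_le_ncard_changes_of_closed (agreementComponent_closed hclosed) agreementComponent_surjective
    _ ≤ _ := Set.ncard_le_ncard hchanges ((Set.finite_Iio ℓ).subset fun i hi => hi.1)

theorem stmt_6 (p ℓ : ℕ) (γ : ℕ → Fin p) (hclosed : γ ℓ = γ 0)
    (hcard : 2 ≤ (γ '' Set.Iic ℓ).ncard)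
    (hfib : ∀ z ∈ γ '' Set.Iic ℓ, 2 ≤ {i | i < ℓ ∧ γ i = z}.ncard)
    (hnoconsec : ∀ i < ℓ, γ i ≠ γ (i + 1))
    {X : Type*} (s : Fin p → X)
    (N : ℕ) (hN : N = Nat.card (agreementGraph p ℓ γ s).ConnectedComponent)
    (C : ℕ) (hC : C = {i | i < ℓ ∧ s (γ i) ≠ s (γ (i + 1))}.ncard)
    (hN2 : 2 ≤ N) :
    N ≤ C :=
  stmt_6_general p ℓ γ hclosed s N hN C hC hN2
end

section
/- Let γ: {0,…,ℓ} → {1,…,p} be a reduced closed path with v_γ ≥ 2 (every vertex visited at least twice and γ(u) ≠ γ(u+1) for all u), and let s be a labeling of V_γ with agreement-graph component count N ≥ 2 and C = #{i : s(γ(i)) ≠ s(γ(i+1))}. Then C ≥ max(N, 3N − v_γ). -/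
open Finset

lemma Nat.forall_le_of_backward_of_cyclic {ℓ j : ℕ} {P : ℕ → Prop}
    (hback : ∀ i < ℓ, P (i + 1) → P i) (hcyc : P 0 → P ℓ) (hj : j ≤ ℓ) (hPj : P j) :
    ∀ i ≤ ℓ, P i := by
  have hP0 : P 0 :=
    Nat.decreasingInduction (motive := fun i _ => P i)
      (fun i hi => hback i (hi.trans_le hj)) hPj (Nat.zero_le j)
  exact fun i hi => Nat.decreasingInduction (motive := fun i _ => P i) hback (hcyc hP0) hi

lemma Finset.sum_range_succ_eq_of_eq {M : Type*} [AddCommMonoid M] [IsRightCancelAdd M]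
    {f : ℕ → M} {ℓ : ℕ} (h : f ℓ = f 0) :
    ∑ i ∈ range ℓ, f (i + 1) = ∑ i ∈ range ℓ, f i := by
  apply add_right_cancel (b := f 0)
  rw [← sum_range_succ', sum_range_succ, h]

lemma SimpleGraph.nat_card_eq_sum_ncard_supp {V : Type*} [Finite V] (G : SimpleGraph V)
    [Fintype G.ConnectedComponent] : Nat.card V = ∑ K : G.ConnectedComponent, K.supp.ncard := by
  classical
  have := Fintype.ofFinite V
  rw [Nat.card_eq_fintype_card, ← card_univ,
    card_eq_sum_card_fiberwise (f := G.connectedComponentMk) (t := univ) (fun _ _ => mem_univ _)]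
  refine sum_congr rfl fun K _ => ?_
  rw [← Set.ncard_coe_finset]
  congr 1
  ext z
  simp [SimpleGraph.ConnectedComponent.mem_supp_iff]

section ClosedPath

variable {p ℓ : ℕ} {γ : ℕ → Fin p}

/-- Clamped at `ℓ` so that it is defined for every `i`. -/
def pathVertex (γ : ℕ → Fin p) (ℓ i : ℕ) : ↥(γ '' Set.Iic ℓ) :=
  ⟨γ (min i ℓ), min i ℓ, min_le_right i ℓ, rfl⟩

lemma pathVertex_coe {i : ℕ} (hi : i ≤ ℓ) : (pathVertex γ ℓ i : Fin p) = γ i := by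
  simp [pathVertex, hi]

lemma exists_pathVertex_eq (z : ↥(γ '' Set.Iic ℓ)) : ∃ i ≤ ℓ, pathVertex γ ℓ i = z := by
  obtain ⟨i, hi, hz⟩ := z.2
  exact ⟨i, hi, Subtype.ext ((pathVertex_coe hi).trans hz)⟩

lemma pathVertex_self_eq_zero (hclosed : γ ℓ = γ 0) : pathVertex γ ℓ ℓ = pathVertex γ ℓ 0 :=
  Subtype.ext (by rw [pathVertex_coe le_rfl, pathVertex_coe (Nat.zero_le ℓ), hclosed])

variable {X : Type*} {s : Fin p → X}

lemma reachable_pathVertex_succ {i : ℕ} (hi : i < ℓ) (hs : s (γ i) = s (γ (i + 1))) :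
    (agreementGraph p ℓ γ s).Reachable (pathVertex γ ℓ i) (pathVertex γ ℓ (i + 1)) := by
  have hcoe := pathVertex_coe (γ := γ) hi.le
  have hcoe' := pathVertex_coe (γ := γ) (Nat.succ_le_of_lt hi)
  by_cases heq : γ i = γ (i + 1)
  · have hv : pathVertex γ ℓ i = pathVertex γ ℓ (i + 1) :=
      Subtype.ext (by rw [hcoe, hcoe', heq])
    exact hv ▸ .rfl
  · refine SimpleGraph.Adj.reachable ⟨fun h => heq ?_, ?_, i, hi, ?_⟩
    · rw [← hcoe, ← hcoe', h]
    · rwa [hcoe, hcoe']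
    · rw [hcoe, hcoe']

lemma connectedComponentMk_pathVertex_succ {i : ℕ} (hi : i < ℓ)
    (hs : s (γ i) = s (γ (i + 1))) :
    (agreementGraph p ℓ γ s).connectedComponentMk (pathVertex γ ℓ i) =
      (agreementGraph p ℓ γ s).connectedComponentMk (pathVertex γ ℓ (i + 1)) :=
  SimpleGraph.ConnectedComponent.sound (reachable_pathVertex_succ hi hs)

open Classical in
noncomputable def entrySteps (K : (agreementGraph p ℓ γ s).ConnectedComponent) : Finset ℕ :=
  {i ∈ range ℓ | s (γ i) ≠ s (γ (i + 1)) ∧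
    (agreementGraph p ℓ γ s).connectedComponentMk (pathVertex γ ℓ (i + 1)) = K}

lemma mem_entrySteps {K : (agreementGraph p ℓ γ s).ConnectedComponent} {i : ℕ} :
    i ∈ entrySteps K ↔ i < ℓ ∧ s (γ i) ≠ s (γ (i + 1)) ∧
      (agreementGraph p ℓ γ s).connectedComponentMk (pathVertex γ ℓ (i + 1)) = K := by
  simp [entrySteps]

lemma entrySteps_nonempty (hclosed : γ ℓ = γ 0)
    {K K' : (agreementGraph p ℓ γ s).ConnectedComponent} (hKK' : K ≠ K') :
    (entrySteps K).Nonempty := by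
  by_contra hempty
  let P i := (agreementGraph p ℓ γ s).connectedComponentMk (pathVertex γ ℓ i) = K
  have hback : ∀ i < ℓ, P (i + 1) → P i := by
    intro i hi hK
    have hs : s (γ i) = s (γ (i + 1)) := by
      by_contra hs
      exact hempty ⟨i, mem_entrySteps.2 ⟨hi, hs, hK⟩⟩
    exact (connectedComponentMk_pathVertex_succ hi hs).trans hK
  obtain ⟨j, hj, hjK⟩ : ∃ j ≤ ℓ, P j := by
    obtain ⟨z, rfl⟩ := K.exists_rep
    obtain ⟨j, hj, rfl⟩ := exists_pathVertex_eq z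
    exact ⟨j, hj, rfl⟩
  have hall := Nat.forall_le_of_backward_of_cyclic hback
    (fun h => by simpa only [P, pathVertex_self_eq_zero hclosed] using h) hj hjK
  obtain ⟨z', rfl⟩ := K'.exists_rep
  obtain ⟨j', hj', rfl⟩ := exists_pathVertex_eq z'
  exact hKK' (hall j' hj').symm

lemma two_le_card_entrySteps (hclosed : γ ℓ = γ 0)
    (hfib : ∀ z ∈ γ '' Set.Iic ℓ, 2 ≤ {i | i < ℓ ∧ γ i = z}.ncard)
    (hnoconsec : ∀ i < ℓ, γ i ≠ γ (i + 1)) {z : ↥(γ '' Set.Iic ℓ)}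
    (hsingle : ∀ w, (agreementGraph p ℓ γ s).connectedComponentMk w =
      (agreementGraph p ℓ γ s).connectedComponentMk z → w = z) :
    2 ≤ #(entrySteps ((agreementGraph p ℓ γ s).connectedComponentMk z)) := by
  classical
  have hvisits : #{i ∈ range ℓ | γ i = z} = {i | i < ℓ ∧ γ i = z}.ncard := by
    rw [← Set.ncard_coe_finset]; congr; ext; simp
  have hentries : #{i ∈ range ℓ | γ (i + 1) = z} = #{i ∈ range ℓ | γ i = z} := by
    simp only [card_filter]
    exact sum_range_succ_eq_of_eq (f := fun i => if γ i = z then 1 else 0) (by rw [hclosed])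
  have hsub : {i ∈ range ℓ | γ (i + 1) = z} ⊆ entrySteps (s := s)
      ((agreementGraph p ℓ γ s).connectedComponentMk z) := by
    intro i hi
    rw [mem_filter, mem_range] at hi
    obtain ⟨hi, hz⟩ := hi
    have hvz : pathVertex γ ℓ (i + 1) = z :=
      Subtype.ext ((pathVertex_coe (Nat.succ_le_of_lt hi)).trans hz)
    refine mem_entrySteps.2 ⟨hi, fun hs => hnoconsec i hi ?_, by rw [hvz]⟩
    have hiz : pathVertex γ ℓ i = z :=
      hsingle _ (by rw [connectedComponentMk_pathVertex_succ hi hs, hvz])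
    rw [← pathVertex_coe (γ := γ) hi.le, hiz, hz]
  calc 2 ≤ #{i ∈ range ℓ | γ (i + 1) = z} := by rw [hentries, hvisits]; exact hfib z z.2
    _ ≤ _ := card_le_card hsub

lemma three_le_card_entrySteps_add_ncard_supp (hclosed : γ ℓ = γ 0)
    (hfib : ∀ z ∈ γ '' Set.Iic ℓ, 2 ≤ {i | i < ℓ ∧ γ i = z}.ncard)
    (hnoconsec : ∀ i < ℓ, γ i ≠ γ (i + 1))
    {K K' : (agreementGraph p ℓ γ s).ConnectedComponent} (hKK' : K ≠ K') :
    3 ≤ #(entrySteps K) + K.supp.ncard := by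
  induction K using SimpleGraph.ConnectedComponent.ind with | h z =>
  by_cases hsingle : ∀ w, (agreementGraph p ℓ γ s).connectedComponentMk w =
      (agreementGraph p ℓ γ s).connectedComponentMk z → w = z
  · have hsupp : 1 ≤ ((agreementGraph p ℓ γ s).connectedComponentMk z).supp.ncard :=
      (Set.ncard_pos (Set.toFinite _)).2 (SimpleGraph.ConnectedComponent.nonempty_supp _)
    have := two_le_card_entrySteps hclosed hfib hnoconsec hsingle
    omega
  · push Not at hsingle
    obtain ⟨w, hwz, hw⟩ := hsingle
    have hsupp : 2 ≤ ((agreementGraph p ℓ γ s).connectedComponentMk z).supp.ncard :=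
      (Set.one_lt_ncard_iff (Set.toFinite _)).2 ⟨w, z, hwz, rfl, hw⟩
    have := card_pos.2 (entrySteps_nonempty hclosed hKK')
    omega

lemma ncard_disagreements_eq_sum_card_entrySteps
    [Fintype (agreementGraph p ℓ γ s).ConnectedComponent] :
    {i | i < ℓ ∧ s (γ i) ≠ s (γ (i + 1))}.ncard =
      ∑ K : (agreementGraph p ℓ γ s).ConnectedComponent, #(entrySteps K) := by
  classical
  have hD : {i | i < ℓ ∧ s (γ i) ≠ s (γ (i + 1))} =
      ↑({i ∈ range ℓ | s (γ i) ≠ s (γ (i + 1))} : Finset ℕ) := by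
    ext; simp
  rw [hD, Set.ncard_coe_finset, card_eq_sum_card_fiberwise (t := univ)
    (f := fun i => (agreementGraph p ℓ γ s).connectedComponentMk (pathVertex γ ℓ (i + 1)))
    (fun _ _ => mem_univ _)]
  refine sum_congr rfl fun K _ => congrArg card ?_
  ext i
  simp [mem_entrySteps, and_assoc]

end ClosedPath

theorem stmt_9_general (p ℓ : ℕ) (γ : ℕ → Fin p) (hclosed : γ ℓ = γ 0)
    (v : ℕ) (hv : v = (γ '' Set.Iic ℓ).ncard)
    (hfib : ∀ z ∈ γ '' Set.Iic ℓ, 2 ≤ {i | i < ℓ ∧ γ i = z}.ncard)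
    (hnoconsec : ∀ i < ℓ, γ i ≠ γ (i + 1))
    {X : Type*} (s : Fin p → X)
    (N : ℕ) (hN : N = Nat.card (agreementGraph p ℓ γ s).ConnectedComponent)
    (C : ℕ) (hC : C = {i | i < ℓ ∧ s (γ i) ≠ s (γ (i + 1))}.ncard)
    (hN2 : 2 ≤ N) :
    max N (3 * N - v) ≤ C := by
  classical
  have hv' : v = ∑ K : (agreementGraph p ℓ γ s).ConnectedComponent, K.supp.ncard := by
    rw [hv, ← Nat.card_coe_set_eq,
      SimpleGraph.nat_card_eq_sum_ncard_supp (agreementGraph p ℓ γ s)]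
  rw [ncard_disagreements_eq_sum_card_entrySteps] at hC
  rw [Nat.card_eq_fintype_card] at hN
  have hother (K : (agreementGraph p ℓ γ s).ConnectedComponent) : ∃ K', K ≠ K' :=
    have : Nontrivial (agreementGraph p ℓ γ s).ConnectedComponent :=
      Fintype.one_lt_card_iff_nontrivial.1 (by omega)
    (exists_ne K).imp fun _ => Ne.symm
  have hNC : N ≤ C := by
    calc N = ∑ _K : (agreementGraph p ℓ γ s).ConnectedComponent, 1 := by simp [hN]
      _ ≤ C := hC ▸ sum_le_sum fun K _ =>
        card_pos.2 (entrySteps_nonempty hclosed (hother K).choose_spec)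
  have h3N : 3 * N ≤ C + v := by
    calc 3 * N = ∑ _K : (agreementGraph p ℓ γ s).ConnectedComponent, 3 := by simp [hN, mul_comm]
      _ ≤ ∑ K, (#(entrySteps K) + K.supp.ncard) := sum_le_sum fun K _ =>
        three_le_card_entrySteps_add_ncard_supp hclosed hfib hnoconsec (hother K).choose_spec
      _ = C + v := by rw [sum_add_distrib, hC, hv']
  omega

theorem stmt_9 (p ℓ : ℕ) (γ : ℕ → Fin p) (hclosed : γ ℓ = γ 0)
    (v : ℕ) (hv : v = (γ '' Set.Iic ℓ).ncard) (hv2 : 2 ≤ v)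
    (hfib : ∀ z ∈ γ '' Set.Iic ℓ, 2 ≤ {i | i < ℓ ∧ γ i = z}.ncard)
    (hnoconsec : ∀ i < ℓ, γ i ≠ γ (i + 1))
    {X : Type*} (s : Fin p → X)
    (N : ℕ) (hN : N = Nat.card (agreementGraph p ℓ γ s).ConnectedComponent)
    (C : ℕ) (hC : C = {i | i < ℓ ∧ s (γ i) ≠ s (γ (i + 1))}.ncard)
    (hN2 : 2 ≤ N) :
    max N (3 * N - v) ≤ C :=
  stmt_9_general p ℓ γ hclosed v hv hfib hnoconsec s N hN C hC hN2
end

section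
/- The number N(n) of pairwise mutually unbiased orthonormal bases of ℂⁿ (n ≥ 2) is at most n+1. Equivalently: if B₁,…,Bₘ are orthonormal bases of ℂⁿ with |⟨u,w⟩| = 1/√n whenever u ∈ Bᵢ, w ∈ Bⱼ, i ≠ j, then m ≤ n + 1. -/
/-!
Send a unit vector `u ∈ ℂⁿ` to the traceless Hermitian matrix `u u* - I/n`. In the Hilbert–Schmidt
inner product these satisfy `⟪u u* - I/n, w w* - I/n⟫ = |⟪u, w⟫|² - 1/n`, so vectors from two
mutually unbiased bases give orthogonal matrices. The `n` vectors of one basis give orthonormal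
matrices `u u*`, so their traceless parts span a space of dimension at least `n - 1`. These `m`
spaces are pairwise orthogonal and lie in the `(n² - 1)`-dimensional space of matrices orthogonal
to `I`, whence `m (n - 1) ≤ n² - 1`.
-/

open scoped InnerProductSpace ComplexConjugate
open Module Submodule

theorem Submodule.sum_finrank_le_of_pairwise_isOrtho {𝕜 E ι : Type*} [RCLike 𝕜]
    [NormedAddCommGroup E] [InnerProductSpace 𝕜 E] [FiniteDimensional 𝕜 E] [Fintype ι]
    {V : ι → Submodule 𝕜 E} (hV : Pairwise fun i j => V i ⟂ V j) {K : Submodule 𝕜 E}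
    (hVK : ∀ i, V i ≤ K) :
    ∑ i, finrank 𝕜 (V i) ≤ finrank 𝕜 K := by
  let v (a : Σ i, Fin (finrank 𝕜 (V i))) : E := stdOrthonormalBasis 𝕜 (V a.1) a.2
  have hv : Orthonormal 𝕜 v :=
    (orthogonalFamily_iff_pairwise.mpr hV).orthonormal_sigma_orthonormal
      fun i => (stdOrthonormalBasis 𝕜 (V i)).orthonormal
  calc ∑ i, finrank 𝕜 (V i) = finrank 𝕜 (span 𝕜 (Set.range v)) := by
        simp [finrank_span_eq_card hv.linearIndependent]
    _ ≤ finrank 𝕜 K :=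
        finrank_mono <| span_le.mpr <| Set.range_subset_iff.mpr fun a =>
          hVK a.1 (stdOrthonormalBasis 𝕜 (V a.1) a.2).2

variable {ι : Type*} [Fintype ι]

/-- The matrix `u u*`, as a vector of `ℂ^(ι × ι)`; the inner product of `EuclideanSpace` is then
the Hilbert–Schmidt inner product `⟪A, B⟫ = tr (A* B)`. -/
noncomputable def outerSelf (u : EuclideanSpace ℂ ι) : EuclideanSpace ℂ (ι × ι) :=
  WithLp.toLp 2 fun p => u p.1 * conj (u p.2)

theorem inner_outerSelf_outerSelf (u w : EuclideanSpace ℂ ι) :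
    ⟪outerSelf u, outerSelf w⟫_ℂ = (‖⟪u, w⟫_ℂ‖ : ℂ) ^ 2 := by
  rw [← Complex.mul_conj']
  simp only [outerSelf, PiLp.inner_apply, RCLike.inner_apply, Fintype.sum_prod_type, map_sum,
    map_mul, Complex.conj_conj, Finset.sum_mul_sum]
  exact Finset.sum_congr rfl fun s _ => Finset.sum_congr rfl fun t _ => by ring

theorem orthonormal_outerSelf_comp {κ : Type*} {v : κ → EuclideanSpace ℂ ι}
    (hv : Orthonormal ℂ v) : Orthonormal ℂ (outerSelf ∘ v) := by
  classical
  rw [orthonormal_iff_ite] at hv ⊢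
  intro a b
  simp only [Function.comp_apply, inner_outerSelf_outerSelf, hv a b]
  split_ifs <;> simp

variable [DecidableEq ι]

variable (ι) in
noncomputable def identityVec : EuclideanSpace ℂ (ι × ι) :=
  WithLp.toLp 2 fun p => if p.1 = p.2 then 1 else 0

theorem inner_identityVec_outerSelf (u : EuclideanSpace ℂ ι) :
    ⟪identityVec ι, outerSelf u⟫_ℂ = (‖u‖ : ℂ) ^ 2 :=
  calc _ = ⟪u, u⟫_ℂ := by
        simp [identityVec, outerSelf, PiLp.inner_apply, Fintype.sum_prod_type, mul_comm,
          -inner_self_eq_norm_sq_to_K]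
    _ = _ := inner_self_eq_norm_sq_to_K u

theorem inner_identityVec_self : ⟪identityVec ι, identityVec ι⟫_ℂ = Fintype.card ι := by
  simp [identityVec, PiLp.inner_apply, Fintype.sum_prod_type, -inner_self_eq_norm_sq_to_K]

noncomputable def tracelessOuter (u : EuclideanSpace ℂ ι) : EuclideanSpace ℂ (ι × ι) :=
  outerSelf u - (Fintype.card ι : ℂ)⁻¹ • identityVec ι

noncomputable def tracelessSpan {κ : Type*} (v : κ → EuclideanSpace ℂ ι) :
    Submodule ℂ (EuclideanSpace ℂ (ι × ι)) :=
  span ℂ (Set.range (tracelessOuter ∘ v))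

variable [Nonempty ι]

theorem identityVec_ne_zero : identityVec ι ≠ 0 := fun h => by
  simpa [h, Fintype.card_ne_zero] using (inner_identityVec_self (ι := ι)).symm

theorem finrank_orthogonal_identityVec :
    finrank ℂ (ℂ ∙ identityVec ι)ᗮ = Fintype.card ι ^ 2 - 1 := by
  have := (ℂ ∙ identityVec ι).finrank_add_finrank_orthogonal
  rw [finrank_span_singleton identityVec_ne_zero, finrank_euclideanSpace,
    Fintype.card_prod] at this
  rw [sq]
  omega

section InnerTracelessOuter

variable {u w : EuclideanSpace ℂ ι}

theorem inner_identityVec_tracelessOuter (hu : ‖u‖ = 1) :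
    ⟪identityVec ι, tracelessOuter u⟫_ℂ = 0 := by
  have : (Fintype.card ι : ℂ) ≠ 0 := by simp [Fintype.card_ne_zero]
  rw [tracelessOuter, inner_sub_right, inner_smul_right, inner_identityVec_outerSelf,
    inner_identityVec_self, hu]
  field_simp
  simp

theorem inner_tracelessOuter_tracelessOuter (hu : ‖u‖ = 1) (hw : ‖w‖ = 1) :
    ⟪tracelessOuter u, tracelessOuter w⟫_ℂ = (‖⟪u, w⟫_ℂ‖ : ℂ) ^ 2 - (Fintype.card ι : ℂ)⁻¹ := by
  have : (Fintype.card ι : ℂ) ≠ 0 := by simp [Fintype.card_ne_zero]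
  have hIw : ⟪identityVec ι, outerSelf w⟫_ℂ = 1 := by simp [inner_identityVec_outerSelf, hw]
  have huI : ⟪outerSelf u, identityVec ι⟫_ℂ = 1 := by
    rw [← inner_conj_symm, inner_identityVec_outerSelf, hu]; simp
  rw [tracelessOuter, tracelessOuter, inner_sub_left, inner_sub_right, inner_sub_right,
    inner_smul_left, inner_smul_left, inner_smul_right, inner_smul_right,
    inner_outerSelf_outerSelf, hIw, huI, inner_identityVec_self]
  simp only [map_inv₀, map_natCast]
  field_simp
  ring

end InnerTracelessOuter

variable {κ κ' : Type*} {v : κ → EuclideanSpace ℂ ι} {v' : κ' → EuclideanSpace ℂ ι}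

theorem tracelessSpan_le_orthogonal_identityVec (hv : ∀ a, ‖v a‖ = 1) :
    tracelessSpan v ≤ (ℂ ∙ identityVec ι)ᗮ :=
  span_le.mpr <| Set.range_subset_iff.mpr fun a =>
    mem_orthogonal_singleton_iff_inner_right.mpr (inner_identityVec_tracelessOuter (hv a))

theorem tracelessSpan_isOrtho (hv : ∀ a, ‖v a‖ = 1) (hv' : ∀ b, ‖v' b‖ = 1)
    (hvv' : ∀ a b, ‖⟪v a, v' b⟫_ℂ‖ ^ 2 = (Fintype.card ι : ℝ)⁻¹) :
    tracelessSpan v ⟂ tracelessSpan v' := by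
  refine isOrtho_span.mpr ?_
  rintro _ ⟨a, rfl⟩ _ ⟨b, rfl⟩
  rw [Function.comp_apply, Function.comp_apply,
    inner_tracelessOuter_tracelessOuter (hv a) (hv' b), ← Complex.ofReal_pow, hvv' a b]
  simp

theorem card_le_finrank_tracelessSpan_add_one [Fintype κ] (hv : Orthonormal ℂ v) :
    Fintype.card κ ≤ finrank ℂ (tracelessSpan v) + 1 := by
  have hspan : span ℂ (Set.range (outerSelf ∘ v)) ≤ (ℂ ∙ identityVec ι) ⊔ tracelessSpan v := by
    refine span_le.mpr <| Set.range_subset_iff.mpr fun a => ?_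
    have : outerSelf (v a) = (Fintype.card ι : ℂ)⁻¹ • identityVec ι + tracelessOuter (v a) := by
      rw [tracelessOuter]; abel
    rw [Function.comp_apply, this]
    exact add_mem_sup (mem_span_singleton.mpr ⟨_, rfl⟩) (subset_span ⟨a, rfl⟩)
  calc Fintype.card κ = finrank ℂ (span ℂ (Set.range (outerSelf ∘ v))) :=
        (finrank_span_eq_card (orthonormal_outerSelf_comp hv).linearIndependent).symm
    _ ≤ finrank ℂ ↥((ℂ ∙ identityVec ι) ⊔ tracelessSpan v) := finrank_mono hspan
    _ ≤ finrank ℂ (ℂ ∙ identityVec ι) + finrank ℂ (tracelessSpan v) :=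
        finrank_add_le_finrank_add_finrank _ _
    _ = finrank ℂ (tracelessSpan v) + 1 := by
        rw [finrank_span_singleton identityVec_ne_zero, add_comm]

theorem card_mul_le_of_pairwise_unbiased {μ : Type*} [Fintype μ]
    (B : μ → OrthonormalBasis ι ℂ (EuclideanSpace ℂ ι))
    (hB : Pairwise fun i j => ∀ a b, ‖⟪B i a, B j b⟫_ℂ‖ ^ 2 = (Fintype.card ι : ℝ)⁻¹) :
    Fintype.card μ * (Fintype.card ι - 1) ≤ Fintype.card ι ^ 2 - 1 := by
  have hnorm (i : μ) (a : ι) : ‖B i a‖ = 1 := (B i).orthonormal.1 a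
  calc Fintype.card μ * (Fintype.card ι - 1) = ∑ _i : μ, (Fintype.card ι - 1) := by simp
    _ ≤ ∑ i, finrank ℂ (tracelessSpan (B i)) := Finset.sum_le_sum fun i _ => by
        have := card_le_finrank_tracelessSpan_add_one (B i).orthonormal
        omega
    _ ≤ finrank ℂ (ℂ ∙ identityVec ι)ᗮ :=
        sum_finrank_le_of_pairwise_isOrtho
          (fun i j hij => tracelessSpan_isOrtho (hnorm i) (hnorm j) (hB hij))
          fun i => tracelessSpan_le_orthogonal_identityVec (hnorm i)
    _ = Fintype.card ι ^ 2 - 1 := finrank_orthogonal_identityVec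

theorem stmt_18 (n m : ℕ) (hn : 2 ≤ n)
    (B : Fin m → OrthonormalBasis (Fin n) ℂ (EuclideanSpace ℂ (Fin n)))
    (hMUB : ∀ i j : Fin m, i ≠ j → ∀ a b : Fin n, ‖⟪B i a, B j b⟫_ℂ‖ = 1 / Real.sqrt n) :
    m ≤ n + 1 := by
  have : NeZero n := ⟨by omega⟩
  have hB : Pairwise fun i j => ∀ a b, ‖⟪B i a, B j b⟫_ℂ‖ ^ 2 = (Fintype.card (Fin n) : ℝ)⁻¹ :=
    fun i j hij a b => by
      rw [hMUB i j hij a b, div_pow, Real.sq_sqrt n.cast_nonneg, one_pow, one_div,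
        Fintype.card_fin]
  have hbound := card_mul_le_of_pairwise_unbiased B hB
  rw [Fintype.card_fin, Fintype.card_fin, sq, mul_self_tsub_one] at hbound
  exact Nat.le_of_mul_le_mul_right hbound (by omega)
end
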